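/- arXiv:1802.02662 — 5 statements merged into one kernel-verified Lean document; each statement's English description precedes it below -/
import Mathlib

section
/- Let d ≥ 1 and let K : ℝ^d → [0,∞) be a measurable even function such that h ↦ K(h)·min{1,|h|} belongs to L¹(ℝ^d). Let E, F ⊆ ℝ^d be measurable sets of strictly positive Lebesgue measure with |E ∩ F| = 0, and assume E has finite perimeter in ℝ^d. Then L_K(E,F) ≤ max{|E|, Per(E)/2} · ∫_{ℝ^d} K(h)·min{1,|h|} dh. -/
open MeasureTheory Filter Set
open scoped ENNReal Topology NNReal RealInnerProductSpace symmDiff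

noncomputable section

abbrev V (d : ℕ) := EuclideanSpace ℝ (Fin d)

variable {d : ℕ}

/-- Nonlocal interaction for an `ℝ≥0∞`-valued kernel. -/
def LK (K : V d → ℝ≥0∞) (E F : Set (V d)) : ℝ≥0∞ :=
  ∫⁻ x in F, ∫⁻ y in E, K (y - x)

/-- Nonlocal perimeter for an `ℝ≥0∞`-valued kernel. -/
def PerK (K : V d → ℝ≥0∞) (E Ω : Set (V d)) : ℝ≥0∞ :=
  LK K (E ∩ Ω) (Eᶜ ∩ Ω) + LK K (E ∩ Ω) (Eᶜ ∩ Ωᶜ) + LK K (E ∩ Ωᶜ) (Eᶜ ∩ Ω)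

/-- Nonlocal interaction for a real-valued kernel. -/
def LKr (K : V d → ℝ) (E F : Set (V d)) : ℝ≥0∞ :=
  ∫⁻ x in F, ∫⁻ y in E, ENNReal.ofReal (K (y - x))

/-- Nonlocal perimeter for a real-valued kernel. -/
def PerKr (K : V d → ℝ) (E Ω : Set (V d)) : ℝ≥0∞ :=
  LKr K (E ∩ Ω) (Eᶜ ∩ Ω) + LKr K (E ∩ Ω) (Eᶜ ∩ Ωᶜ) + LKr K (E ∩ Ωᶜ) (Eᶜ ∩ Ω)

/-- Local part of the nonlocal energy. -/
def J1 (K : V d → ℝ) (u : V d → ℝ) (Ω : Set (V d)) : ℝ≥0∞ :=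
  ∫⁻ y in Ω, ∫⁻ x in Ω, ENNReal.ofReal (K (y - x) * |u y - u x|)

/-- Nonlocal part of the nonlocal energy. -/
def J2 (K : V d → ℝ) (u : V d → ℝ) (Ω : Set (V d)) : ℝ≥0∞ :=
  ∫⁻ y in Ω, ∫⁻ x in Ωᶜ, ENNReal.ofReal (K (y - x) * |u y - u x|)

/-- Total nonlocal energy. -/
def JK (K : V d → ℝ) (u : V d → ℝ) (Ω : Set (V d)) : ℝ≥0∞ :=
  2⁻¹ * J1 K u Ω + J2 K u Ω

/-- Divergence of a vector field. -/
def divg (φ : V d → V d) (x : V d) : ℝ :=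
  ∑ i, fderiv ℝ φ x (EuclideanSpace.single i 1) i

/-- De Giorgi perimeter of `E` in an open set `A`. -/
def DGPer (E A : Set (V d)) : ℝ≥0∞ :=
  ⨆ (φ : V d → V d) (_ : ContDiff ℝ 1 φ) (_ : HasCompactSupport φ)
    (_ : tsupport φ ⊆ A) (_ : ∀ x, ‖φ x‖ ≤ 1),
    ENNReal.ofReal (∫ x in E, divg φ x)

/-- Total variation of `u` on `A`. -/
def variation (u : V d → ℝ) (A : Set (V d)) : ℝ≥0∞ :=
  ⨆ (φ : V d → V d) (_ : ContDiff ℝ 1 φ) (_ : HasCompactSupport φ)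
    (_ : tsupport φ ⊆ A) (_ : ∀ x, ‖φ x‖ ≤ 1),
    ENNReal.ofReal (∫ x in A, u x * divg φ x)

/-- Mass-preserving rescaling of a kernel. -/
def Keps (K : V d → ℝ) (ε : ℝ) (h : V d) : ℝ := (ε ^ d)⁻¹ * K (ε⁻¹ • h)

/-- `Ω` has Lipschitz boundary: near every boundary point, `Ω` is the subgraph of
a Lipschitz function in a suitable direction. -/
def HasLipschitzBoundary (Ω : Set (V d)) : Prop :=
  ∀ x ∈ frontier Ω, ∃ (U : Set (V d)) (e : V d) (φ : V d → ℝ) (L : ℝ≥0),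
    IsOpen U ∧ x ∈ U ∧ ‖e‖ = 1 ∧ LipschitzWith L φ ∧
    Ω ∩ U = {y ∈ U | ⟪y, e⟫ < φ (y - ⟪y, e⟫ • e)}

/-- The open unit cube. -/
def cube (d : ℕ) : Set (V d) := {x | ∀ i, x i ∈ Ioo (-(1/2) : ℝ) (1/2)}

/-- The lower halfspace. -/
def halfspace (d : ℕ) : Set (V (d + 1)) := {x | x (Fin.last d) < 0}

/-!
Substituting `y = x + h` gives `L_K(E, F) = ∫ K(h) |(E - h) ∩ F| dh`, so it suffices to bound
`|(E - h) ∩ F|` by `min 1 |h| · max |E| (Per(E)/2)`. Trivially `|(E - h) ∩ F| ≤ |E|`. Since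
`E ∩ F` is null, also `|(E - h) ∩ F| ≤ |(E - h) \ E| = |(E - h) ∆ E| / 2`, and
`|(E - h) ∆ E| ≤ |h| Per(E)` by duality: `f = 1_{E - h} - 1_E` satisfies `∫ f² = |(E - h) ∆ E|`,
it is approximated in `L¹` by smooth compactly supported `ψ` with `|ψ| ≤ 1`, and
`∫ f ψ = ∫_E (ψ(x - h) - ψ(x)) dx = ∫₀¹ ∫_E ∂_{-h} ψ(x - t h) dx dt`, where each inner integral is
at most `|h| Per(E)` by testing the perimeter with the field `ψ(· - t h) h / |h|`.
-/

section Approximation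

variable {X : Type*} [NormedAddCommGroup X] [NormedSpace ℝ X] [FiniteDimensional ℝ X]
  [MeasurableSpace X] [BorelSpace X] {μ : Measure X}

theorem abs_clamp_sub_le {s t : ℝ} (hs : |s| ≤ 1) : |max (-1) (min 1 t) - s| ≤ |t - s| := by
  grind [abs_le, le_abs_self, neg_abs_le]

theorem exists_continuous_abs_le_one_eLpNorm_sub_le [μ.Regular] {g : X → ℝ}
    (hg : MemLp g 1 μ) (hg1 : ∀ x, |g x| ≤ 1) {ε : ℝ≥0∞} (hε : ε ≠ 0) :
    ∃ u : X → ℝ, Continuous u ∧ HasCompactSupport u ∧ (∀ x, |u x| ≤ 1) ∧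
      eLpNorm (g - u) 1 μ ≤ ε := by
  obtain ⟨u₀, hu₀c, hgu₀, hu₀, -⟩ :=
    hg.exists_hasCompactSupport_eLpNorm_sub_le ENNReal.one_ne_top hε
  refine ⟨fun x => max (-1) (min 1 (u₀ x)), by fun_prop,
    hu₀c.comp_left (g := fun t : ℝ => max (-1) (min 1 t)) (by norm_num),
    fun x => abs_le.2 ⟨le_max_left _ _, max_le (by norm_num) (min_le_left _ _)⟩,
    (eLpNorm_mono fun x => ?_).trans hgu₀⟩
  simpa only [Pi.sub_apply, Real.norm_eq_abs, abs_sub_comm (g x)] using abs_clamp_sub_le (hg1 x)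

theorem exists_contDiff_abs_le_one_eLpNorm_sub_le_of_continuous [IsFiniteMeasureOnCompacts μ]
    {u : X → ℝ} (hu : Continuous u) (huc : HasCompactSupport u) (hu1 : ∀ x, |u x| ≤ 1)
    {ε : ℝ≥0∞} (hε : ε ≠ 0) :
    ∃ ψ : X → ℝ, ContDiff ℝ 1 ψ ∧ HasCompactSupport ψ ∧ (∀ x, |ψ x| ≤ 1) ∧
      eLpNorm (u - ψ) 1 μ ≤ ε := by
  have hlim : Tendsto (fun η : ℝ => ENNReal.ofReal (2 * η) * μ (tsupport u)) (𝓝[>] 0) (𝓝 0) := by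
    have : Tendsto (fun η : ℝ => ENNReal.ofReal (2 * η)) (𝓝[>] 0) (𝓝 0) := by
      simpa using (ENNReal.tendsto_ofReal ((continuous_const_mul 2).tendsto 0)).mono_left
        nhdsWithin_le_nhds
    simpa using ENNReal.Tendsto.mul_const this (Or.inr huc.measure_lt_top.ne)
  obtain ⟨η, ⟨hη, hη1⟩, hηε⟩ := (Filter.Eventually.and (Ioc_mem_nhdsGT one_pos)
    (hlim.eventually (gt_mem_nhds (pos_iff_ne_zero.2 hε)))).exists
  -- approximating `(1 - η) u` uniformly to within `η` keeps the approximant in `[-1, 1]`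
  obtain ⟨ψ, hψ, hψu, hψsupp⟩ := (continuous_const.mul hu).exists_contDiff_approx 1
    (f := fun x => (1 - η) * u x) continuous_const (fun _ => hη)
  have hbounds : ∀ x, |ψ x| ≤ 1 ∧ dist (u x) (ψ x) ≤ 2 * η := fun x => by
    obtain ⟨hψ₁, hψ₂⟩ := abs_lt.1 (Real.dist_eq _ _ ▸ hψu x)
    obtain ⟨hu₁, hu₂⟩ := abs_le.1 (hu1 x)
    rw [Real.dist_eq, abs_le, abs_le]
    refine ⟨⟨?_, ?_⟩, ?_, ?_⟩ <;> nlinarith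
  refine ⟨ψ, hψ, huc.mono (hψsupp.trans (Function.support_mul_subset_right _ _)), fun x => ?_,
    (eLpNorm_sub_le_of_dist_bdd μ ENNReal.one_ne_top (isClosed_tsupport u).measurableSet
      (by positivity) (fun x => (hbounds x).2) (subset_tsupport u) ?_).trans ?_⟩
  · exact (hbounds x).1
  · exact (hψsupp.trans (Function.support_mul_subset_right _ _)).trans (subset_tsupport u)
  · simpa using hηε.le

theorem exists_contDiff_abs_le_one_eLpNorm_sub_le [μ.Regular] {g : X → ℝ} (hg : MemLp g 1 μ)
    (hg1 : ∀ x, |g x| ≤ 1) {ε : ℝ≥0∞} (hε : ε ≠ 0) :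
    ∃ ψ : X → ℝ, ContDiff ℝ 1 ψ ∧ HasCompactSupport ψ ∧ (∀ x, |ψ x| ≤ 1) ∧
      eLpNorm (g - ψ) 1 μ ≤ ε := by
  obtain ⟨u, hu, huc, hu1, hgu⟩ :=
    exists_continuous_abs_le_one_eLpNorm_sub_le hg hg1 (ENNReal.half_pos hε).ne'
  obtain ⟨ψ, hψ, hψc, hψ1, huψ⟩ :=
    exists_contDiff_abs_le_one_eLpNorm_sub_le_of_continuous (μ := μ) hu huc hu1
      (ENNReal.half_pos hε).ne'
  refine ⟨ψ, hψ, hψc, hψ1, ?_⟩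
  calc eLpNorm (g - ψ) 1 μ = eLpNorm ((g - u) + (u - ψ)) 1 μ := by rw [sub_add_sub_cancel]
    _ ≤ eLpNorm (g - u) 1 μ + eLpNorm (u - ψ) 1 μ :=
        eLpNorm_add_le (hg.1.sub hu.aestronglyMeasurable)
          (hu.aestronglyMeasurable.sub hψ.continuous.aestronglyMeasurable) le_rfl
    _ ≤ ε / 2 + ε / 2 := add_le_add hgu huψ
    _ = ε := ENNReal.add_halves ε

theorem integral_mul_self_le_of_forall_integral_mul_le [μ.Regular] {f : X → ℝ}
    (hf : Integrable f μ) (hf1 : ∀ x, |f x| ≤ 1) {C : ℝ}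
    (hC : ∀ ψ : X → ℝ, ContDiff ℝ 1 ψ → HasCompactSupport ψ → (∀ x, |ψ x| ≤ 1) →
      ∫ x, f x * ψ x ∂μ ≤ C) :
    ∫ x, f x * f x ∂μ ≤ C := by
  refine le_of_forall_pos_le_add fun δ hδ => ?_
  obtain ⟨ψ, hψ, hψc, hψ1, hfψ⟩ := exists_contDiff_abs_le_one_eLpNorm_sub_le
    (memLp_one_iff_integrable.2 hf) hf1 (ENNReal.ofReal_pos.2 hδ).ne'
  have hψi : Integrable ψ μ := hψ.continuous.integrable_of_hasCompactSupport hψc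
  have hsub : Integrable (f - ψ) μ := hf.sub hψi
  have hfsub : Integrable (fun x => f x * (f - ψ) x) μ :=
    hsub.bdd_mul hf.1 (.of_forall hf1)
  have herr : ∫ x, f x * (f - ψ) x ∂μ ≤ δ := calc
    _ ≤ ∫ x, ‖(f - ψ) x‖ ∂μ := integral_mono hfsub hsub.norm fun x =>
        (le_abs_self _).trans (by rw [abs_mul]; exact mul_le_of_le_one_left (abs_nonneg _) (hf1 x))
    _ = (eLpNorm (f - ψ) 1 μ).toReal := by
        rw [integral_norm_eq_lintegral_enorm hsub.1, eLpNorm_one_eq_lintegral_enorm]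
    _ ≤ δ := ENNReal.toReal_le_of_le_ofReal hδ.le hfψ
  calc ∫ x, f x * f x ∂μ = ∫ x, f x * ψ x ∂μ + ∫ x, f x * (f - ψ) x ∂μ := by
        rw [← integral_add (hψi.bdd_mul hf.1 (.of_forall hf1)) hfsub]
        simp [mul_sub]
    _ ≤ C + δ := add_le_add (hC ψ hψ hψc hψ1) herr

end Approximation

theorem divg_smul_const {ψ : V d → ℝ} {x : V d} (hψ : DifferentiableAt ℝ ψ x) (a : V d) :
    divg (fun y => ψ y • a) x = fderiv ℝ ψ x a := by
  conv_rhs => rw [← (EuclideanSpace.basisFun (Fin d) ℝ).sum_repr a]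
  simp [divg, fderiv_smul_const hψ, mul_comm]

theorem ofReal_setIntegral_divg_le_dgPer {E A : Set (V d)} {φ : V d → V d}
    (hφ : ContDiff ℝ 1 φ) (hφc : HasCompactSupport φ) (hφA : tsupport φ ⊆ A)
    (hφ1 : ∀ x, ‖φ x‖ ≤ 1) :
    ENNReal.ofReal (∫ x in E, divg φ x) ≤ DGPer E A :=
  le_iSup₂_of_le φ hφ <| le_iSup₂_of_le hφc hφA <| le_iSup_of_le hφ1 le_rfl

theorem setIntegral_fderiv_le_dgPer {E : Set (V d)} (hPer : DGPer E univ ≠ ⊤) {ψ : V d → ℝ}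
    (hψ : ContDiff ℝ 1 ψ) (hψc : HasCompactSupport ψ) (hψ1 : ∀ x, |ψ x| ≤ 1) (a : V d) :
    ∫ x in E, fderiv ℝ ψ x a ≤ ‖a‖ * (DGPer E univ).toReal := by
  rcases eq_or_ne a 0 with rfl | ha
  · simp
  set u : V d := ‖a‖⁻¹ • a
  have hscale : ∀ x, fderiv ℝ ψ x a = ‖a‖ * fderiv ℝ ψ x u := fun x => by
    rw [map_smul, smul_eq_mul, ← mul_assoc, mul_inv_cancel₀ (norm_ne_zero_iff.2 ha), one_mul]
  have hu : ∫ x in E, fderiv ℝ ψ x u ≤ (DGPer E univ).toReal := by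
    rw [← ENNReal.ofReal_le_iff_le_toReal hPer]
    have hnorm : ∀ x, ‖ψ x • u‖ ≤ 1 := fun x => by
      simpa [u, norm_smul, ha] using hψ1 x
    simpa only [divg_smul_const (hψ.differentiable one_ne_zero _)] using
      ofReal_setIntegral_divg_le_dgPer (E := E) (φ := fun y => ψ y • u)
        (hψ.smul contDiff_const) hψc.smul_right (subset_univ _) hnorm
  simp_rw [hscale, integral_const_mul]
  exact mul_le_mul_of_nonneg_left hu (norm_nonneg a)

theorem sub_eq_integral_fderiv_apply {F : Type*} [NormedAddCommGroup F] [NormedSpace ℝ F]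
    {ψ : F → ℝ} (hψ : ContDiff ℝ 1 ψ) (x a : F) :
    ψ (x + a) - ψ x = ∫ t in (0 : ℝ)..1, fderiv ℝ ψ (x + t • a) a := by
  have hderiv : ∀ t : ℝ, HasDerivAt (fun s : ℝ => ψ (x + s • a)) (fderiv ℝ ψ (x + t • a) a) t :=
    fun t => (hψ.differentiable one_ne_zero _).hasFDerivAt.comp_hasDerivAt t
      (((hasDerivAt_id t).smul_const a).const_add x |>.congr_deriv (one_smul ℝ a))
  have hcont : Continuous fun t : ℝ => fderiv ℝ ψ (x + t • a) a :=
    ((hψ.continuous_fderiv one_ne_zero).comp (by fun_prop)).clm_apply continuous_const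
  rw [intervalIntegral.integral_eq_sub_of_hasDerivAt (fun t _ => hderiv t)
    (hcont.intervalIntegrable 0 1)]
  simp

theorem setIntegral_sub_le_norm_mul_dgPer {E : Set (V d)} (hE : volume E ≠ ⊤)
    (hPer : DGPer E univ ≠ ⊤) {ψ : V d → ℝ} (hψ : ContDiff ℝ 1 ψ) (hψc : HasCompactSupport ψ)
    (hψ1 : ∀ x, |ψ x| ≤ 1) (a : V d) :
    ∫ x in E, (ψ (x + a) - ψ x) ≤ ‖a‖ * (DGPer E univ).toReal := by
  have : IsFiniteMeasure (volume.restrict E) := isFiniteMeasure_restrict.2 hE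
  set g : V d × ℝ → ℝ := fun p => fderiv ℝ ψ (p.1 + p.2 • a) a
  have hg : Integrable g ((volume.restrict E).prod (volume.restrict (Ioc 0 1))) := by
    obtain ⟨C, hC⟩ :=
      (hψ.continuous_fderiv one_ne_zero).bounded_above_of_compact_support (hψc.fderiv (𝕜 := ℝ))
    have hgc : Continuous g :=
      ((hψ.continuous_fderiv one_ne_zero).comp (by fun_prop)).clm_apply continuous_const
    exact .of_bound hgc.aestronglyMeasurable (C * ‖a‖) (.of_forall fun p =>
      ((fderiv ℝ ψ _).le_opNorm a).trans (mul_le_mul_of_nonneg_right (hC _) (norm_nonneg a)))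
  calc ∫ x in E, (ψ (x + a) - ψ x) = ∫ x in E, ∫ t in Ioc (0 : ℝ) 1, g (x, t) := by
        simp_rw [sub_eq_integral_fderiv_apply hψ, intervalIntegral.integral_of_le zero_le_one]
        rfl
    _ = ∫ t in Ioc (0 : ℝ) 1, ∫ x in E, g (x, t) := integral_integral_swap hg
    _ ≤ ∫ t in Ioc (0 : ℝ) 1, ‖a‖ * (DGPer E univ).toReal := by
        refine integral_mono hg.integral_prod_right (integrable_const _) fun t => ?_
        simpa only [g, fderiv_comp_add_right] using
          setIntegral_fderiv_le_dgPer (ψ := fun y => ψ (y + t • a)) hPer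
          (hψ.comp (contDiff_id.add contDiff_const))
          (hψc.comp_homeomorph (Homeomorph.addRight (t • a))) (fun x => hψ1 _) a
    _ = ‖a‖ * (DGPer E univ).toReal := by simp

theorem measure_preimage_add_symmDiff_le {E : Set (V d)} (hE : MeasurableSet E)
    (hEfin : volume E ≠ ⊤) (hPer : DGPer E univ ≠ ⊤) (h : V d) :
    volume (((· + h) ⁻¹' E) ∆ E) ≤ ENNReal.ofReal ‖h‖ * DGPer E univ := by
  set T := (· + h) ⁻¹' E
  have hT : MeasurableSet T := measurable_add_const h hE
  have hTfin : volume T ≠ ⊤ := by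
    rwa [(measurePreserving_add_right volume h).measure_preimage hE.nullMeasurableSet]
  set f : V d → ℝ := T.indicator 1 - E.indicator 1
  have hf : Integrable f :=
    (integrable_indicator_iff hT |>.2 (integrableOn_const hTfin)).sub
      (integrable_indicator_iff hE |>.2 (integrableOn_const hEfin))
  have hf1 : ∀ x, |f x| ≤ 1 := fun x => by
    by_cases hxT : x ∈ T <;> by_cases hxE : x ∈ E <;> simp [f, hxT, hxE]
  have hff : ∀ x, f x * f x = (T ∆ E).indicator 1 x := fun x => by
    by_cases hxT : x ∈ T <;> by_cases hxE : x ∈ E <;> simp [f, hxT, hxE, mem_symmDiff]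
  have htest : ∀ ψ : V d → ℝ, ContDiff ℝ 1 ψ → HasCompactSupport ψ → (∀ x, |ψ x| ≤ 1) →
      ∫ x, f x * ψ x ≤ ‖h‖ * (DGPer E univ).toReal := by
    intro ψ hψ hψc hψ1
    have hψi : Integrable ψ := hψ.continuous.integrable_of_hasCompactSupport hψc
    have hfψ : ∀ x, f x * ψ x = T.indicator ψ x - E.indicator ψ x := fun x => by
      by_cases hxT : x ∈ T <;> by_cases hxE : x ∈ E <;> simp [f, hxT, hxE]
    have htranslate : ∫ x in T, ψ x = ∫ x in E, ψ (x + -h) := by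
      simpa using (measurePreserving_add_right volume h).setIntegral_preimage_emb
        (measurableEmbedding_addRight h) (fun y => ψ (y + -h)) E
    calc ∫ x, f x * ψ x = ∫ x in E, (ψ (x + -h) - ψ x) := by
          rw [integral_congr_ae (.of_forall hfψ), integral_sub (hψi.indicator hT)
            (hψi.indicator hE), integral_indicator hT, integral_indicator hE, htranslate,
            integral_sub (hψi.comp_add_right _).integrableOn hψi.integrableOn]
      _ ≤ ‖-h‖ * (DGPer E univ).toReal :=
          setIntegral_sub_le_norm_mul_dgPer hEfin hPer hψ hψc hψ1 (-h)
      _ = ‖h‖ * (DGPer E univ).toReal := by rw [norm_neg]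
  have hreal := integral_mul_self_le_of_forall_integral_mul_le hf hf1 htest
  rw [integral_congr_ae (.of_forall hff), integral_indicator_one (hT.symmDiff hE)] at hreal
  rw [← ENNReal.ofReal_toReal hPer, ← ENNReal.ofReal_mul (norm_nonneg h)]
  exact (ENNReal.le_ofReal_iff_toReal_le (measure_symmDiff_ne_top hTfin hEfin)
    (by positivity)).2 hreal

theorem measure_preimage_add_inter_le {E F : Set (V d)} (hE : MeasurableSet E)
    (hdisj : volume (E ∩ F) = 0) (h : V d) :
    volume ((· + h) ⁻¹' E ∩ F) ≤
      ENNReal.ofReal (min 1 ‖h‖) * max (volume E) (DGPer E univ / 2) := by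
  set T := (· + h) ⁻¹' E
  have hT : MeasurableSet T := measurable_add_const h hE
  have hTvol : volume T = volume E :=
    (measurePreserving_add_right volume h).measure_preimage hE.nullMeasurableSet
  rcases eq_or_ne h 0 with rfl | hh
  · simp [T, hdisj]
  by_cases htop : max (volume E) (DGPer E univ / 2) = ⊤
  · rw [htop, ENNReal.mul_top (by simpa using hh)]
    exact le_top
  obtain ⟨hEfin, hPer⟩ : volume E ≠ ⊤ ∧ DGPer E univ ≠ ⊤ := by
    simpa [ENNReal.div_eq_top, not_or] using htop
  rcases le_total 1 ‖h‖ with h1 | h1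
  · rw [min_eq_left h1, ENNReal.ofReal_one, one_mul]
    exact (measure_mono inter_subset_left).trans (hTvol.le.trans (le_max_left _ _))
  rw [min_eq_right h1]
  calc volume (T ∩ F) ≤ volume (T \ E) := by
        rw [← measure_sdiff_null hdisj]
        exact measure_mono fun x hx => ⟨hx.1.1, fun hxE => hx.2 ⟨hxE, hx.1.2⟩⟩
    _ ≤ ENNReal.ofReal ‖h‖ * (DGPer E univ / 2) := by
        have hsymm := measure_preimage_add_symmDiff_le hE hEfin hPer h
        rw [measure_symmDiff_eq hT.nullMeasurableSet hE.nullMeasurableSet,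
          ← measure_sdiff_symm hT.nullMeasurableSet hE.nullMeasurableSet hTvol
            (measure_ne_top_of_subset inter_subset_right hEfin)] at hsymm
        rw [← mul_div_assoc, ENNReal.le_div_iff_mul_le (by simp) (by simp), mul_two]
        exact hsymm
    _ ≤ _ := by gcongr; exact le_max_right _ _

theorem lk_eq_lintegral_mul_measure_preimage_add_inter {K : V d → ℝ≥0∞} (hK : Measurable K)
    {E : Set (V d)} (hE : MeasurableSet E) (F : Set (V d)) :
    LK K E F = ∫⁻ h, K h * volume ((· + h) ⁻¹' E ∩ F) := by
  have hinner : ∀ x, ∫⁻ y in E, K (y - x) = ∫⁻ h, ((· + h) ⁻¹' E).indicator 1 x * K h := by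
    intro x
    rw [← lintegral_indicator hE, ← lintegral_add_right_eq_self _ x]
    congr with h
    by_cases hx : h + x ∈ E <;> simp [hx, add_comm x]
  have hmeas : Measurable fun p : V d × V d => ((· + p.2) ⁻¹' E).indicator 1 p.1 * K p.2 :=
    ((measurable_one.indicator hE).comp measurable_add).mul (hK.comp measurable_snd)
  calc LK K E F = ∫⁻ x in F, ∫⁻ h, ((· + h) ⁻¹' E).indicator 1 x * K h := by
        simp_rw [LK, hinner]
    _ = ∫⁻ h, ∫⁻ x in F, ((· + h) ⁻¹' E).indicator 1 x * K h :=
        lintegral_lintegral_swap hmeas.aemeasurable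
    _ = ∫⁻ h, K h * volume ((· + h) ⁻¹' E ∩ F) := by
        congr with h
        rw [lintegral_mul_const _ (measurable_one.indicator (measurable_add_const h hE)),
          lintegral_indicator_one (measurable_add_const h hE),
          Measure.restrict_apply (measurable_add_const h hE), mul_comm]

theorem lk_le_of_finite_perimeter_general {d : ℕ} (K : V d → ℝ) (hKm : Measurable K)
    (E F : Set (V d)) (hE : MeasurableSet E) (hdisj : volume (E ∩ F) = 0) :
    LKr K E F ≤ max (volume E) (DGPer E univ / 2) *
      ∫⁻ h, ENNReal.ofReal (K h * min 1 ‖h‖) := by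
  calc LKr K E F = ∫⁻ h, ENNReal.ofReal (K h) * volume ((· + h) ⁻¹' E ∩ F) :=
        lk_eq_lintegral_mul_measure_preimage_add_inter hKm.ennreal_ofReal hE F
    _ ≤ ∫⁻ h, ENNReal.ofReal (K h * min 1 ‖h‖) * max (volume E) (DGPer E univ / 2) := by
        refine lintegral_mono fun h => ?_
        rw [ENNReal.ofReal_mul' (by positivity), mul_assoc]
        gcongr
        exact measure_preimage_add_inter_le hE hdisj h
    _ = max (volume E) (DGPer E univ / 2) * ∫⁻ h, ENNReal.ofReal (K h * min 1 ‖h‖) := by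
        rw [lintegral_mul_const _ (by fun_prop), mul_comm]

/-- interaction bound via perimeter for disjoint sets. -/
theorem lk_le_of_finite_perimeter {d : ℕ} (hd : 1 ≤ d)
    (K : V d → ℝ) (hKm : Measurable K) (hK0 : ∀ h, 0 ≤ K h) (hKe : ∀ h, K (-h) = K h)
    (hKi : Integrable (fun h : V d => K h * min 1 ‖h‖))
    (E F : Set (V d)) (hE : MeasurableSet E) (hF : MeasurableSet F)
    (hEpos : 0 < volume E) (hFpos : 0 < volume F)
    (hdisj : volume (E ∩ F) = 0) (hPer : DGPer E univ < ⊤) :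
    LKr K E F ≤ max (volume E) (DGPer E univ / 2) *
      ∫⁻ h, ENNReal.ofReal (K h * min 1 ‖h‖) :=
  lk_le_of_finite_perimeter_general K hKm E F hE hdisj
end
end

section
/- Let d ≥ 1, let K : ℝ^d → [0,∞] be a measurable even function, and let Ω ⊆ ℝ^d be a measurable set of strictly positive Lebesgue measure. Then the nonlocal K-perimeter is submodular: for all measurable sets E, F ⊆ ℝ^d, Per_K(E ∩ F, Ω) + Per_K(E ∪ F, Ω) ≤ Per_K(E, Ω) + Per_K(F, Ω) (an inequality in [0,∞]). -/
open MeasureTheory Filter Set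
open scoped ENNReal Topology NNReal RealInnerProductSpace symmDiff

noncomputable section

variable {d : ℕ}

/-!
Integrating `K (y - x)` against the product measure turns `Per_K(E, Ω)` into the mass of the
set of pairs `(x, y)` with `x ∉ E`, `y ∈ E` and at least one of `x, y` in `Ω`: the edge cut
of `E` in the "graph" of pairs meeting `Ω`. Cut functions of graphs are submodular, since a
pair cut by both `E ∩ F` and `E ∪ F` is cut by both `E` and `F`, and a pair cut by one of
`E ∩ F`, `E ∪ F` is cut by one of `E`, `F`.
-/

section EdgeCut

variable {α : Type*}

def edgeCut (G : Set (α × α)) (S : Set α) : Set (α × α) := G ∩ Sᶜ ×ˢ S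

theorem edgeCut_inter_union_subset (G : Set (α × α)) (S T : Set α) :
    edgeCut G (S ∩ T) ∪ edgeCut G (S ∪ T) ⊆ edgeCut G S ∪ edgeCut G T := by
  rintro ⟨x, y⟩ h
  simp only [edgeCut, mem_union, mem_inter_iff, mem_prod, mem_compl_iff] at h ⊢
  tauto

theorem edgeCut_inter_inter_subset (G : Set (α × α)) (S T : Set α) :
    edgeCut G (S ∩ T) ∩ edgeCut G (S ∪ T) ⊆ edgeCut G S ∩ edgeCut G T := by
  rintro ⟨x, y⟩ h
  simp only [edgeCut, mem_union, mem_inter_iff, mem_prod, mem_compl_iff] at h ⊢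
  tauto

def pairsMeeting (Ω : Set α) : Set (α × α) := {p | p.1 ∈ Ω ∨ p.2 ∈ Ω}

theorem edgeCut_pairsMeeting (E Ω : Set α) :
    edgeCut (pairsMeeting Ω) E =
      (Eᶜ ∩ Ω) ×ˢ (E ∩ Ω) ∪ (Eᶜ ∩ Ωᶜ) ×ˢ (E ∩ Ω) ∪ (Eᶜ ∩ Ω) ×ˢ (E ∩ Ωᶜ) := by
  ext ⟨x, y⟩
  simp only [edgeCut, pairsMeeting, mem_union, mem_inter_iff, mem_prod, mem_compl_iff,
    mem_ofPred_eq]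
  tauto

variable [MeasurableSpace α]

theorem MeasurableSet.pairsMeeting {Ω : Set α} (hΩ : MeasurableSet Ω) :
    MeasurableSet (pairsMeeting Ω) :=
  (measurable_fst hΩ).union (measurable_snd hΩ)

theorem MeasurableSet.edgeCut {G : Set (α × α)} {S : Set α} (hG : MeasurableSet G)
    (hS : MeasurableSet S) : MeasurableSet (edgeCut G S) :=
  hG.inter (hS.compl.prod hS)

theorem measure_edgeCut_submodular (ν : Measure (α × α)) {G : Set (α × α)} {S T : Set α}
    (hG : MeasurableSet G) (hS : MeasurableSet S) (hT : MeasurableSet T) :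
    ν (edgeCut G (S ∩ T)) + ν (edgeCut G (S ∪ T)) ≤ ν (edgeCut G S) + ν (edgeCut G T) :=
  calc ν (edgeCut G (S ∩ T)) + ν (edgeCut G (S ∪ T))
      = ν (edgeCut G (S ∩ T) ∪ edgeCut G (S ∪ T)) + ν (edgeCut G (S ∩ T) ∩ edgeCut G (S ∪ T)) :=
        (measure_union_add_inter _ (hG.edgeCut (hS.union hT))).symm
    _ ≤ ν (edgeCut G S ∪ edgeCut G T) + ν (edgeCut G S ∩ edgeCut G T) :=
        add_le_add (measure_mono (edgeCut_inter_union_subset G S T))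
          (measure_mono (edgeCut_inter_inter_subset G S T))
    _ = ν (edgeCut G S) + ν (edgeCut G T) := measure_union_add_inter _ (hG.edgeCut hT)

end EdgeCut

def interactionMeasure (K : V d → ℝ≥0∞) : Measure (V d × V d) :=
  (volume.prod volume).withDensity fun p => K (p.2 - p.1)

theorem LK_eq_interactionMeasure {K : V d → ℝ≥0∞} (hK : Measurable K) (A B : Set (V d)) :
    LK K A B = interactionMeasure K (B ×ˢ A) := by
  rw [interactionMeasure, withDensity_apply',
    setLIntegral_prod (fun p : V d × V d => K (p.2 - p.1))
      (hK.comp (measurable_snd.sub measurable_fst)).aemeasurable, LK]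

theorem PerK_eq_interactionMeasure_edgeCut {K : V d → ℝ≥0∞} (hK : Measurable K)
    {E Ω : Set (V d)} (hE : MeasurableSet E) (hΩ : MeasurableSet Ω) :
    PerK K E Ω = interactionMeasure K (edgeCut (pairsMeeting Ω) E) := by
  have hΩ_disj {A B : Set (V d)} : Disjoint (A ∩ Ω) (B ∩ Ωᶜ) :=
    disjoint_compl_right.mono inter_subset_right inter_subset_right
  rw [edgeCut_pairsMeeting, measure_union _ ((hE.compl.inter hΩ).prod (hE.inter hΩ.compl)),
    measure_union _ ((hE.compl.inter hΩ.compl).prod (hE.inter hΩ)), PerK,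
    LK_eq_interactionMeasure hK, LK_eq_interactionMeasure hK, LK_eq_interactionMeasure hK]
  · exact Set.disjoint_prod.mpr (Or.inl hΩ_disj)
  · exact (Set.disjoint_prod.mpr (Or.inr hΩ_disj)).union_left
      (Set.disjoint_prod.mpr (Or.inr hΩ_disj))

theorem perK_submodular_general {d : ℕ}
    (K : V d → ℝ≥0∞) (hKm : Measurable K)
    (Ω : Set (V d)) (hΩ : MeasurableSet Ω)
    (E F : Set (V d)) (hE : MeasurableSet E) (hF : MeasurableSet F) :
    PerK K (E ∩ F) Ω + PerK K (E ∪ F) Ω ≤ PerK K E Ω + PerK K F Ω := by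
  simp only [PerK_eq_interactionMeasure_edgeCut hKm (hE.inter hF) hΩ,
    PerK_eq_interactionMeasure_edgeCut hKm (hE.union hF) hΩ,
    PerK_eq_interactionMeasure_edgeCut hKm hE hΩ, PerK_eq_interactionMeasure_edgeCut hKm hF hΩ]
  exact measure_edgeCut_submodular _ hΩ.pairsMeeting hE hF

/-- the nonlocal perimeter is submodular. -/
theorem perK_submodular {d : ℕ} (hd : 1 ≤ d)
    (K : V d → ℝ≥0∞) (hKm : Measurable K) (hKe : ∀ h, K (-h) = K h)
    (Ω : Set (V d)) (hΩ : MeasurableSet Ω) (hΩpos : 0 < volume Ω)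
    (E F : Set (V d)) (hE : MeasurableSet E) (hF : MeasurableSet F) :
    PerK K (E ∩ F) Ω + PerK K (E ∪ F) Ω ≤ PerK K E Ω + PerK K F Ω :=
  perK_submodular_general K hKm Ω hΩ E F hE hF

end
end

section
/- Let d ≥ 1, let K : ℝ^d → [0,∞] be a measurable even function, and let Ω ⊆ ℝ^d be measurable with |Ω| > 0. Then Per_K(·,Ω) is lower semicontinuous with respect to L¹_loc(ℝ^d)-convergence of sets: if E_n, E ⊆ ℝ^d are measurable and |(E_n △ E) ∩ C| → 0 for every compact C ⊆ ℝ^d, then Per_K(E,Ω) ≤ liminf_{n→∞} Per_K(E_n,Ω). -/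
open MeasureTheory Filter Set
open scoped ENNReal Topology NNReal RealInnerProductSpace symmDiff

noncomputable section

variable {d : ℕ}

/-! The three interactions making up `Per_K(E, Ω)` are integrals of `K (y - x)` over rectangles
in `ℝ^d × ℝ^d` whose sides are cut out by `E` and `Ω`, so Fatou's lemma on the product space gives
lower semicontinuity along every sequence `E_n` converging to `E` pointwise almost everywhere.
Local `L¹` convergence produces such a sequence inside any infinite set of indices: pick `n_k` in it
with `|(E_{n_k} ∆ E) ∩ C_k| ≤ 2^{-k}` for a compact exhaustion `(C_k)`; by Borel–Cantelli almost
every `x` lies in `E_{n_k} ∆ E` for only finitely many `k`. Taking the indices at which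
`Per_K(E_n, Ω)` stays below a level above the liminf gives the theorem. -/

theorem ENNReal.le_liminf_add {ι : Type*} {l : Filter ι} (u v : ι → ℝ≥0∞) :
    liminf u l + liminf v l ≤ liminf (u + v) l := by
  simp only [liminf_eq_iSup_iInf]
  refine ENNReal.biSup_add_biSup_le' ⟨univ, univ_mem⟩ ⟨univ, univ_mem⟩ fun s hs t ht => ?_
  exact le_iSup₂_of_le (s ∩ t) (inter_mem hs ht)
    (le_iInf₂ fun i hi => add_le_add (iInf₂_le i hi.1) (iInf₂_le i hi.2))

theorem setLIntegral_le_liminf_of_ae_eventually_mem_iff {α ι : Type*} [MeasurableSpace α]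
    {μ : Measure α} {l : Filter ι} [IsCountablyGenerated l] {f : α → ℝ≥0∞} (hf : Measurable f)
    {S : Set α} {Ss : ι → Set α} (hS : MeasurableSet S) (hSs : ∀ i, MeasurableSet (Ss i))
    (hconv : ∀ᵐ x ∂μ, ∀ᶠ i in l, (x ∈ Ss i ↔ x ∈ S)) :
    ∫⁻ x in S, f x ∂μ ≤ liminf (fun i => ∫⁻ x in Ss i, f x ∂μ) l := by
  simp only [← lintegral_indicator hS, ← lintegral_indicator (hSs _)]
  calc ∫⁻ x, S.indicator f x ∂μ
      ≤ ∫⁻ x, liminf (fun i => (Ss i).indicator f x) l ∂μ :=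
        lintegral_mono_ae <| hconv.mono fun x hx => le_liminf_of_le (by isBoundedDefault) <|
          hx.mono fun i hi => (indicator_eq_indicator hi rfl).ge
    _ ≤ liminf (fun i => ∫⁻ x, (Ss i).indicator f x ∂μ) l :=
        lintegral_liminf_le fun i => hf.indicator (hSs i)

theorem exists_seq_ae_eventually_mem_iff_of_frequently {α : Type*} [TopologicalSpace α]
    [SigmaCompactSpace α] [MeasurableSpace α] {μ : Measure α} {E : Set α} {En : ℕ → Set α}
    {p : ℕ → Prop} (hp : ∃ᶠ n in atTop, p n)
    (hconv : ∀ C : Set α, IsCompact C → Tendsto (fun n => μ ((En n ∆ E) ∩ C)) atTop (𝓝 0)) :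
    ∃ τ : ℕ → ℕ, (∀ k, p (τ k)) ∧ ∀ᵐ x ∂μ, ∀ᶠ k in atTop, (x ∈ En (τ k) ↔ x ∈ E) := by
  have hsmall : ∀ k : ℕ, ∃ n, p n ∧ μ ((En n ∆ E) ∩ compactCovering α k) ≤ 2⁻¹ ^ k := fun k =>
    (hp.and_eventually ((hconv _ (isCompact_compactCovering α k)).eventually
      (ge_mem_nhds (ENNReal.pow_pos (by simp) k)))).exists
  choose τ hτp hτμ using hsmall
  have hsum : ∑' k, μ ((En (τ k) ∆ E) ∩ compactCovering α k) ≠ ∞ :=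
    ne_top_of_le_ne_top (by simp [ENNReal.tsum_geometric, ENNReal.one_sub_inv_two])
      (ENNReal.tsum_le_tsum hτμ)
  refine ⟨τ, hτp, ?_⟩
  filter_upwards [ae_eventually_notMem hsum] with x hx
  obtain ⟨m, hm⟩ := exists_mem_compactCovering x
  filter_upwards [hx, eventually_ge_atTop m] with k hxk hmk
  have hxC : x ∈ compactCovering α k := compactCovering_subset α hmk hm
  by_contra hne
  exact hxk ⟨by rw [mem_symmDiff]; tauto, hxC⟩

section Interaction

variable {K : V d → ℝ≥0∞}

theorem LK_eq_setLIntegral_prod (hK : Measurable K) (A B : Set (V d)) :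
    LK K A B = ∫⁻ p in B ×ˢ A, K (p.2 - p.1) :=
  (setLIntegral_prod _ (hK.comp (measurable_snd.sub measurable_fst)).aemeasurable).symm

theorem LK_le_liminf_of_ae_eventually_mem_iff {ι : Type*} {l : Filter ι}
    [IsCountablyGenerated l] (hK : Measurable K) {A B : Set (V d)} {As Bs : ι → Set (V d)}
    (hA : MeasurableSet A) (hB : MeasurableSet B) (hAs : ∀ i, MeasurableSet (As i))
    (hBs : ∀ i, MeasurableSet (Bs i)) (hAconv : ∀ᵐ x, ∀ᶠ i in l, (x ∈ As i ↔ x ∈ A))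
    (hBconv : ∀ᵐ x, ∀ᶠ i in l, (x ∈ Bs i ↔ x ∈ B)) :
    LK K A B ≤ liminf (fun i => LK K (As i) (Bs i)) l := by
  have hprod : ∀ᵐ p : V d × V d, ∀ᶠ i in l, (p ∈ Bs i ×ˢ As i ↔ p ∈ B ×ˢ A) := by
    filter_upwards [Measure.quasiMeasurePreserving_fst.ae hBconv,
      Measure.quasiMeasurePreserving_snd.ae hAconv] with p hp₁ hp₂
    exact hp₁.and hp₂ |>.mono fun i hi => and_congr hi.1 hi.2
  simp only [LK_eq_setLIntegral_prod hK]
  exact setLIntegral_le_liminf_of_ae_eventually_mem_iff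
    (hK.comp (measurable_snd.sub measurable_fst)) (hB.prod hA) (fun i => (hBs i).prod (hAs i))
    hprod

theorem PerK_le_liminf_of_ae_eventually_mem_iff {ι : Type*} {l : Filter ι}
    [IsCountablyGenerated l] (hK : Measurable K) {Ω E : Set (V d)} {Es : ι → Set (V d)}
    (hΩ : MeasurableSet Ω) (hE : MeasurableSet E) (hEs : ∀ i, MeasurableSet (Es i))
    (hconv : ∀ᵐ x, ∀ᶠ i in l, (x ∈ Es i ↔ x ∈ E)) :
    PerK K E Ω ≤ liminf (fun i => PerK K (Es i) Ω) l := by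
  have hin (S : Set (V d)) : ∀ᵐ x, ∀ᶠ i in l, (x ∈ Es i ∩ S ↔ x ∈ E ∩ S) :=
    hconv.mono fun _ hx => hx.mono fun _ hi => and_congr_left' hi
  have hout (S : Set (V d)) : ∀ᵐ x, ∀ᶠ i in l, (x ∈ (Es i)ᶜ ∩ S ↔ x ∈ Eᶜ ∩ S) :=
    hconv.mono fun _ hx => hx.mono fun _ hi => and_congr_left' hi.not
  calc PerK K E Ω
      ≤ liminf (fun i => LK K (Es i ∩ Ω) ((Es i)ᶜ ∩ Ω)) l
        + liminf (fun i => LK K (Es i ∩ Ω) ((Es i)ᶜ ∩ Ωᶜ)) l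
        + liminf (fun i => LK K (Es i ∩ Ωᶜ) ((Es i)ᶜ ∩ Ω)) l := by
        unfold PerK
        gcongr <;> refine LK_le_liminf_of_ae_eventually_mem_iff hK ?_ ?_ (fun i => ?_)
          (fun i => ?_) (hin _) (hout _) <;> measurability
    _ ≤ liminf (fun i => PerK K (Es i) Ω) l :=
        (add_le_add_left (ENNReal.le_liminf_add _ _) _).trans (ENNReal.le_liminf_add _ _)

end Interaction

theorem perK_lowerSemicontinuous_general {d : ℕ}
    (K : V d → ℝ≥0∞) (hKm : Measurable K)
    (Ω : Set (V d)) (hΩ : MeasurableSet Ω)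
    (E : Set (V d)) (En : ℕ → Set (V d))
    (hE : MeasurableSet E) (hEn : ∀ n, MeasurableSet (En n))
    (hconv : ∀ C : Set (V d), IsCompact C →
      Tendsto (fun n => volume ((En n ∆ E) ∩ C)) atTop (𝓝 0)) :
    PerK K E Ω ≤ liminf (fun n => PerK K (En n) Ω) atTop := by
  by_contra! hlt
  obtain ⟨c, hlim, hc⟩ := exists_between hlt
  obtain ⟨τ, hτc, hτconv⟩ := exists_seq_ae_eventually_mem_iff_of_frequently
    (frequently_lt_of_liminf_lt (by isBoundedDefault) hlim) hconv
  have hle : liminf (fun k => PerK K (En (τ k)) Ω) atTop ≤ c :=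
    liminf_le_of_frequently_le' (Frequently.of_forall fun k => (hτc k).le)
  exact ((PerK_le_liminf_of_ae_eventually_mem_iff hKm hΩ hE (fun k => hEn _) hτconv).trans
    hle).not_gt hc

/-- lower semicontinuity of the nonlocal perimeter w.r.t.
`L¹_loc`-convergence of sets. -/
theorem perK_lowerSemicontinuous {d : ℕ} (hd : 1 ≤ d)
    (K : V d → ℝ≥0∞) (hKm : Measurable K) (hKe : ∀ h, K (-h) = K h)
    (Ω : Set (V d)) (hΩ : MeasurableSet Ω) (hΩpos : 0 < volume Ω)
    (E : Set (V d)) (En : ℕ → Set (V d))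
    (hE : MeasurableSet E) (hEn : ∀ n, MeasurableSet (En n))
    (hconv : ∀ C : Set (V d), IsCompact C →
      Tendsto (fun n => volume ((En n ∆ E) ∩ C)) atTop (𝓝 0)) :
    PerK K E Ω ≤ liminf (fun n => PerK K (En n) Ω) atTop :=
  perK_lowerSemicontinuous_general K hKm Ω hΩ E En hE hEn hconv

end
end

section
/- Optimality conditions for nonlocal minimal surfaces: let d ≥ 1, let K : ℝ^d → [0,∞) be a measurable even function, let Ω ⊆ ℝ^d be open and bounded, and let E be a measurable set with Per_K(E,Ω) < ∞ that minimises Per_K(·,Ω) among all measurable sets F with Per_K(F,Ω) < ∞ and F ∩ Ωᶜ = E ∩ Ωᶜ. Then: (i) L_K(E,F) ≤ L_K(Eᶜ ∩ Fᶜ, F) for every measurable F ⊆ Eᶜ ∩ Ω, and (ii) L_K(Eᶜ,F) ≤ L_K(E ∩ Fᶜ, F) for every measurable F ⊆ E ∩ Ω. -/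
/-!
Adding a set `F ⊆ Eᶜ ∩ Ω` to `E` gives an admissible competitor, and the perimeter changes
exactly by `L_K(Eᶜ ∩ Fᶜ, F) - L_K(E, F)`; minimality of `E` makes this change nonnegative,
which is (i). For even `K` the perimeter is invariant under `E ↦ Eᶜ`, so `Eᶜ` is again a
minimiser, and (ii) is (i) applied to `Eᶜ`.
-/

open MeasureTheory Filter Set
open scoped ENNReal Topology NNReal RealInnerProductSpace symmDiff

noncomputable section

variable {d : ℕ}

lemma union_inter_compl_of_subset {α : Type*} {s t u : Set α} (h : t ⊆ u) :
    (s ∪ t) ∩ uᶜ = s ∩ uᶜ := by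
  rw [union_inter_distrib_right, (disjoint_compl_right.mono_left h).inter_eq, union_empty]

def IsPerKrMinimizer (K : V d → ℝ) (E Ω : Set (V d)) : Prop :=
  PerKr K E Ω < ⊤ ∧ ∀ F : Set (V d), MeasurableSet F → PerKr K F Ω < ⊤ →
    F ∩ Ωᶜ = E ∩ Ωᶜ → PerKr K E Ω ≤ PerKr K F Ω

lemma LKr_union_right (K : V d → ℝ) (A : Set (V d)) {B₁ B₂ : Set (V d)}
    (hB₂ : MeasurableSet B₂) (hB : Disjoint B₁ B₂) :
    LKr K A (B₁ ∪ B₂) = LKr K A B₁ + LKr K A B₂ :=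
  lintegral_union hB₂ hB

section Interaction

variable {K : V d → ℝ} (hKm : Measurable K)
include hKm

lemma measurable_lintegral_ofReal_kernel (A : Set (V d)) :
    Measurable fun x : V d => ∫⁻ y in A, ENNReal.ofReal (K (y - x)) :=
  Measurable.lintegral_prod_right (f := fun x y => ENNReal.ofReal (K (y - x)))
    (hKm.comp (measurable_snd.sub measurable_fst)).ennreal_ofReal

lemma LKr_union_left {A₁ A₂ : Set (V d)} (B : Set (V d)) (hA₂ : MeasurableSet A₂)
    (hA : Disjoint A₁ A₂) : LKr K (A₁ ∪ A₂) B = LKr K A₁ B + LKr K A₂ B := by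
  rw [LKr, LKr, LKr, ← lintegral_add_left (measurable_lintegral_ofReal_kernel hKm A₁)]
  exact lintegral_congr fun x => lintegral_union hA₂ hA

lemma LKr_comm (hKe : ∀ h, K (-h) = K h) (A B : Set (V d)) : LKr K A B = LKr K B A := by
  rw [LKr, LKr, lintegral_lintegral_swap
    ((hKm.comp (measurable_snd.sub measurable_fst)).ennreal_ofReal.aemeasurable)]
  refine lintegral_congr fun y => lintegral_congr fun x => ?_
  rw [← hKe, neg_sub]

lemma PerKr_compl (hKe : ∀ h, K (-h) = K h) (E Ω : Set (V d)) :
    PerKr K Eᶜ Ω = PerKr K E Ω := by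
  rw [PerKr, PerKr, compl_compl, LKr_comm hKm hKe (Eᶜ ∩ Ω), LKr_comm hKm hKe (Eᶜ ∩ Ω),
    LKr_comm hKm hKe (Eᶜ ∩ Ωᶜ)]
  ring

end Interaction

lemma PerKr_union_add_LKr {K : V d → ℝ} (hKm : Measurable K) {E F Ω : Set (V d)}
    (hE : MeasurableSet E) (hF : MeasurableSet F) (hΩ : MeasurableSet Ω) (hFE : F ⊆ Eᶜ)
    (hFΩ : F ⊆ Ω) :
    PerKr K (E ∪ F) Ω + LKr K E F = PerKr K E Ω + LKr K F (Eᶜ ∩ Fᶜ) := by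
  have hEc_split : Eᶜ ∩ Ω = Eᶜ ∩ Fᶜ ∩ Ω ∪ F := by
    ext x; have := @hFE x; have := @hFΩ x
    simp only [mem_inter_iff, mem_union, mem_compl_iff]; tauto
  have hEcFc_split : Eᶜ ∩ Fᶜ = Eᶜ ∩ Fᶜ ∩ Ω ∪ Eᶜ ∩ Ωᶜ := by
    ext x; have := @hFΩ x; simp only [mem_inter_iff, mem_union, mem_compl_iff]; tauto
  have hEF_in : (E ∪ F) ∩ Ω = E ∩ Ω ∪ F := by
    rw [union_inter_distrib_right, inter_eq_left.mpr hFΩ]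
  have hEFc_out : Eᶜ ∩ Fᶜ ∩ Ωᶜ = Eᶜ ∩ Ωᶜ := by
    rw [inter_assoc, inter_eq_right.mpr (compl_subset_compl.mpr hFΩ)]
  have hdisj_in : Disjoint (Eᶜ ∩ Fᶜ ∩ Ω) F :=
    disjoint_compl_left.mono_left (inter_subset_left.trans inter_subset_right)
  have hdisj_out : Disjoint (Eᶜ ∩ Fᶜ ∩ Ω) (Eᶜ ∩ Ωᶜ) :=
    disjoint_compl_right.mono inter_subset_right inter_subset_right
  have hdisj_EF : Disjoint (E ∩ Ω) F :=
    (disjoint_compl_right.mono_right hFE).mono_left inter_subset_left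
  have hdisj_E : Disjoint (E ∩ Ω) (E ∩ Ωᶜ) :=
    disjoint_compl_right.mono inter_subset_right inter_subset_right
  have hLE_split : LKr K E F = LKr K (E ∩ Ω) F + LKr K (E ∩ Ωᶜ) F := by
    rw [← LKr_union_left hKm F (hE.inter hΩ.compl) hdisj_E, inter_union_compl]
  have hLF_split :
      LKr K F (Eᶜ ∩ Fᶜ) = LKr K F (Eᶜ ∩ Fᶜ ∩ Ω) + LKr K F (Eᶜ ∩ Ωᶜ) := by
    rw [← LKr_union_right K F (hE.compl.inter hΩ.compl) hdisj_out, ← hEcFc_split]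
  rw [hLE_split, hLF_split, PerKr, PerKr, compl_union, hEF_in, union_inter_compl_of_subset hFΩ,
    hEFc_out, hEc_split, LKr_union_left hKm _ hF hdisj_EF, LKr_union_left hKm _ hF hdisj_EF,
    LKr_union_right K _ hF hdisj_in, LKr_union_right K _ hF hdisj_in]
  ring

namespace IsPerKrMinimizer

variable {K : V d → ℝ} {E Ω : Set (V d)}

lemma compl (hKm : Measurable K) (hKe : ∀ h, K (-h) = K h) (hE : IsPerKrMinimizer K E Ω) :
    IsPerKrMinimizer K Eᶜ Ω := by
  refine ⟨by rw [PerKr_compl hKm hKe]; exact hE.1, fun G hG hGfin hGdata => ?_⟩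
  have hGc_data : Gᶜ ∩ Ωᶜ = E ∩ Ωᶜ := by
    ext x; have := Set.ext_iff.mp hGdata x; simp only [mem_inter_iff, mem_compl_iff] at *; tauto
  rw [PerKr_compl hKm hKe, ← PerKr_compl hKm hKe G]
  exact hE.2 Gᶜ hG.compl (by rwa [PerKr_compl hKm hKe]) hGc_data

lemma LKr_le (hKm : Measurable K) (hKe : ∀ h, K (-h) = K h) (hΩ : MeasurableSet Ω)
    (hEm : MeasurableSet E) (hE : IsPerKrMinimizer K E Ω) {F : Set (V d)}
    (hFm : MeasurableSet F) (hF : F ⊆ Eᶜ ∩ Ω) : LKr K E F ≤ LKr K (Eᶜ ∩ Fᶜ) F := by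
  have hFE : F ⊆ Eᶜ := hF.trans inter_subset_left
  have hFΩ : F ⊆ Ω := hF.trans inter_subset_right
  have hident := PerKr_union_add_LKr hKm hEm hFm hΩ hFE hFΩ
  rw [LKr_comm hKm hKe F] at hident
  rcases eq_or_ne (LKr K (Eᶜ ∩ Fᶜ) F) ⊤ with htop | htop
  · exact htop ▸ le_top
  have hEF_fin : PerKr K (E ∪ F) Ω < ⊤ :=
    calc PerKr K (E ∪ F) Ω ≤ PerKr K (E ∪ F) Ω + LKr K E F := le_self_add
      _ = PerKr K E Ω + LKr K (Eᶜ ∩ Fᶜ) F := hident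
      _ < ⊤ := ENNReal.add_lt_top.mpr ⟨hE.1, htop.lt_top⟩
  refine ENNReal.le_of_add_le_add_left hEF_fin.ne ?_
  rw [hident]
  exact add_le_add_left (hE.2 _ (hEm.union hFm) hEF_fin (union_inter_compl_of_subset hFΩ)) _

end IsPerKrMinimizer

theorem plateau_optimality_general {d : ℕ}
    (K : V d → ℝ) (hKm : Measurable K) (hKe : ∀ h, K (-h) = K h)
    (Ω : Set (V d)) (hΩo : IsOpen Ω)
    (E : Set (V d)) (hE : MeasurableSet E) (hEfin : PerKr K E Ω < ⊤)
    (hmin : ∀ F : Set (V d), MeasurableSet F → PerKr K F Ω < ⊤ → F ∩ Ωᶜ = E ∩ Ωᶜ →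
      PerKr K E Ω ≤ PerKr K F Ω) :
    (∀ F : Set (V d), MeasurableSet F → F ⊆ Eᶜ ∩ Ω →
        LKr K E F ≤ LKr K (Eᶜ ∩ Fᶜ) F) ∧
    (∀ F : Set (V d), MeasurableSet F → F ⊆ E ∩ Ω →
        LKr K Eᶜ F ≤ LKr K (E ∩ Fᶜ) F) := by
  have hEmin : IsPerKrMinimizer K E Ω := ⟨hEfin, hmin⟩
  refine ⟨fun F hFm hF => hEmin.LKr_le hKm hKe hΩo.measurableSet hE hFm hF, fun F hFm hF => ?_⟩
  simpa only [compl_compl] using (hEmin.compl hKm hKe).LKr_le hKm hKe hΩo.measurableSet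
    hE.compl hFm (by rwa [compl_compl])

/-- optimality conditions for nonlocal minimal surfaces. -/
theorem plateau_optimality {d : ℕ} (hd : 1 ≤ d)
    (K : V d → ℝ) (hKm : Measurable K) (hK0 : ∀ h, 0 ≤ K h) (hKe : ∀ h, K (-h) = K h)
    (Ω : Set (V d)) (hΩo : IsOpen Ω) (hΩb : Bornology.IsBounded Ω)
    (E : Set (V d)) (hE : MeasurableSet E) (hEfin : PerKr K E Ω < ⊤)
    (hmin : ∀ F : Set (V d), MeasurableSet F → PerKr K F Ω < ⊤ → F ∩ Ωᶜ = E ∩ Ωᶜ →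
      PerKr K E Ω ≤ PerKr K F Ω) :
    (∀ F : Set (V d), MeasurableSet F → F ⊆ Eᶜ ∩ Ω →
        LKr K E F ≤ LKr K (Eᶜ ∩ Fᶜ) F) ∧
    (∀ F : Set (V d), MeasurableSet F → F ⊆ E ∩ Ω →
        LKr K Eᶜ F ≤ LKr K (E ∩ Fᶜ) F) :=
  plateau_optimality_general K hKm hKe Ω hΩo E hE hEfin hmin

end
end

section
/- Vanishing of rescaled interactions at positive distance: let d ≥ 1 and let K : ℝ^d → [0,∞) be a measurable even function with ∫_{ℝ^d} K(h)|h| dh < ∞. Let E, F ⊆ ℝ^d be measurable with |E| < ∞ and dist(E,F) > 0. Then lim_{ε→0⁺} (1/ε)·L_ε(E,F) = 0, where L_ε := L_{K_ε} and K_ε(h) := ε^{−d} K(h/ε). -/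
open MeasureTheory Filter Set
open scoped ENNReal Topology NNReal RealInnerProductSpace symmDiff

noncomputable section

variable {d : ℕ}

/-!
Since `E` and `F` are `δ`-apart, only `|h| ≥ δ` contributes to `L_ε(E, F)`, and there
`1 ≤ |h| / δ`. Integrating first over `F`, translation invariance bounds `ε⁻¹ L_ε(E, F)` by
`|E| δ⁻¹ ∫_{|h| ≥ δ} ε⁻¹ K_ε(h) |h| dh`, which the substitution `h = ε z` turns into
`|E| δ⁻¹ ∫_{|z| ≥ δ/ε} K(z) |z| dz`: the tail of an integrable function, so it vanishes as `ε → 0⁺`.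
-/

section Translation

variable {G : Type*} [MeasurableSpace G] [AddGroup G] [MeasurableAdd₂ G] [MeasurableNeg G]
  {μ : Measure G} [SFinite μ] [μ.IsAddLeftInvariant] [μ.IsNegInvariant]

theorem lintegral_lintegral_sub_le {g : G → ℝ≥0∞} (hg : Measurable g) (E F : Set G) :
    ∫⁻ x in F, ∫⁻ y in E, g (y - x) ∂μ ∂μ ≤ μ E * ∫⁻ h, g h ∂μ :=
  calc ∫⁻ x in F, ∫⁻ y in E, g (y - x) ∂μ ∂μ
      ≤ ∫⁻ x, ∫⁻ y in E, g (y - x) ∂μ ∂μ := setLIntegral_le_lintegral _ _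
    _ = ∫⁻ y in E, ∫⁻ x, g (y - x) ∂μ ∂μ :=
        lintegral_lintegral_swap (hg.comp (measurable_snd.sub measurable_fst)).aemeasurable
    _ = μ E * ∫⁻ h, g h ∂μ := by
        simp_rw [lintegral_sub_left_eq_self, setLIntegral_const, mul_comm]

end Translation

theorem lintegral_comp_smul_addHaar {E : Type*} [NormedAddCommGroup E] [NormedSpace ℝ E]
    [MeasurableSpace E] [BorelSpace E] [FiniteDimensional ℝ E] (μ : Measure E) [μ.IsAddHaarMeasure]
    (f : E → ℝ≥0∞) {r : ℝ} (hr : r ≠ 0) :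
    ∫⁻ x, f (r • x) ∂μ = ENNReal.ofReal |(r ^ Module.finrank ℝ E)⁻¹| * ∫⁻ x, f x ∂μ := by
  rw [← smul_eq_mul, ← lintegral_smul_measure, ← Measure.map_addHaar_smul μ hr]
  exact (lintegral_map_equiv f (MeasurableEquiv.smul₀ r hr)).symm

theorem tendsto_setLIntegral_le_norm_atTop_zero {E : Type*} [SeminormedAddGroup E]
    [MeasurableSpace E] [OpensMeasurableSpace E] {μ : Measure E} {f : E → ℝ≥0∞}
    (hf : ∫⁻ x, f x ∂μ ≠ ∞) :
    Tendsto (fun R : ℝ => ∫⁻ x in {x | R ≤ ‖x‖}, f x ∂μ) atTop (𝓝 0) := by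
  have hmeas (R : ℝ) : MeasurableSet {x : E | R ≤ ‖x‖} :=
    (isClosed_le continuous_const continuous_norm).measurableSet
  have hanti : Antitone fun R : ℝ => {x : E | R ≤ ‖x‖} := fun _ _ hRR' _ hx => hRR'.trans hx
  have hempty : ⋂ R : ℝ, {x : E | R ≤ ‖x‖} = ∅ :=
    eq_empty_of_forall_notMem fun x hx => by
      have hx' : ‖x‖ + 1 ≤ ‖x‖ := mem_iInter.1 hx (‖x‖ + 1)
      linarith
  have hfin : μ.withDensity f {x | 0 ≤ ‖x‖} ≠ ∞ := by
    rw [withDensity_apply _ (hmeas 0)]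
    exact ne_top_of_le_ne_top hf (setLIntegral_le_lintegral _ _)
  have := tendsto_measure_iInter_atTop (fun R => (hmeas R).nullMeasurableSet) hanti ⟨0, hfin⟩
  simpa only [hempty, measure_empty, Function.comp_def, withDensity_apply _ (hmeas _)] using this

theorem lintegral_ofReal_Keps_mul (K : V d → ℝ) {ε : ℝ} (hε : 0 < ε) (φ : V d → ℝ≥0∞) :
    ∫⁻ h, ENNReal.ofReal (Keps K ε h) * φ (ε⁻¹ • h) = ∫⁻ z, ENNReal.ofReal (K z) * φ z := by
  simp_rw [Keps, ENNReal.ofReal_mul (inv_nonneg.2 (pow_nonneg hε.le d)), mul_assoc]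
  rw [lintegral_const_mul' _ _ ENNReal.ofReal_ne_top,
    lintegral_comp_smul_addHaar volume (fun z => ENNReal.ofReal (K z) * φ z) (inv_ne_zero hε.ne'),
    ← mul_assoc, ← ENNReal.ofReal_mul (by positivity), finrank_euclideanSpace_fin, inv_pow, inv_inv, abs_of_pos (pow_pos hε d), inv_mul_cancel₀ (pow_pos hε d).ne',
    ENNReal.ofReal_one, one_mul]

theorem ofReal_inv_le_mul_indicator_enorm_inv_smul {E : Type*} [SeminormedAddCommGroup E]
    [NormedSpace ℝ E] {δ ε : ℝ} (hδ : 0 < δ) (hε : 0 < ε) {h : E} (hh : δ ≤ ‖h‖) :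
    ENNReal.ofReal ε⁻¹ ≤
      ENNReal.ofReal δ⁻¹ * {z : E | δ / ε ≤ ‖z‖}.indicator (‖·‖ₑ) (ε⁻¹ • h) := by
  have hscaled : ‖ε⁻¹ • h‖ = ε⁻¹ * ‖h‖ := by
    rw [norm_smul, Real.norm_of_nonneg (inv_nonneg.2 hε.le)]
  have hmem : ε⁻¹ • h ∈ {z : E | δ / ε ≤ ‖z‖} := by
    rw [mem_ofPred_eq, hscaled, div_eq_inv_mul]
    gcongr
  rw [indicator_of_mem hmem, ← ofReal_norm, hscaled, ← ENNReal.ofReal_mul (inv_nonneg.2 hδ.le)]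
  refine ENNReal.ofReal_le_ofReal ?_
  calc ε⁻¹ = δ⁻¹ * (ε⁻¹ * δ) := by field_simp
    _ ≤ δ⁻¹ * (ε⁻¹ * ‖h‖) := by gcongr

theorem ofReal_inv_mul_LKr_Keps_le (K : V d → ℝ) (hKm : Measurable K) {E F : Set (V d)}
    {δ ε : ℝ} (hδ : 0 < δ) (hε : 0 < ε) (hEF : ∀ x ∈ E, ∀ y ∈ F, δ ≤ dist x y) :
    ENNReal.ofReal ε⁻¹ * LKr (Keps K ε) E F ≤
      volume E * (ENNReal.ofReal δ⁻¹ *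
        ∫⁻ z in {z : V d | δ / ε ≤ ‖z‖}, ENNReal.ofReal (K z) * ‖z‖ₑ) := by
  set S := {z : V d | δ / ε ≤ ‖z‖}
  have hS : MeasurableSet S := (isClosed_le continuous_const continuous_norm).measurableSet
  set g : V d → ℝ≥0∞ := fun h =>
    ENNReal.ofReal δ⁻¹ * (ENNReal.ofReal (Keps K ε h) * S.indicator (‖·‖ₑ) (ε⁻¹ • h))
  have hg : Measurable g := by
    unfold g Keps
    exact measurable_const.mul
      (((hKm.comp (measurable_const_smul _)).const_mul _).ennreal_ofReal.mul
        ((measurable_enorm.indicator hS).comp (measurable_const_smul _)))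
  have hpoint (x : V d) (hx : x ∈ F) (y : V d) (hy : y ∈ E) :
      ENNReal.ofReal ε⁻¹ * ENNReal.ofReal (Keps K ε (y - x)) ≤ g (y - x) := by
    have hδh : δ ≤ ‖y - x‖ := by simpa [dist_eq_norm] using hEF y hy x hx
    simp only [g]
    rw [mul_left_comm, mul_comm]
    gcongr
    exact ofReal_inv_le_mul_indicator_enorm_inv_smul hδ hε hδh
  calc ENNReal.ofReal ε⁻¹ * LKr (Keps K ε) E F
      = ∫⁻ x in F, ∫⁻ y in E, ENNReal.ofReal ε⁻¹ * ENNReal.ofReal (Keps K ε (y - x)) := by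
        simp_rw [LKr, ← lintegral_const_mul' _ _ ENNReal.ofReal_ne_top]
    _ ≤ ∫⁻ x in F, ∫⁻ y in E, g (y - x) :=
        setLIntegral_mono (hg.comp (measurable_snd.sub measurable_fst)).lintegral_prod_right'
          fun x hx => setLIntegral_mono (hg.comp (measurable_id.sub measurable_const)) (hpoint x hx)
    _ ≤ volume E * ∫⁻ h, g h := lintegral_lintegral_sub_le hg E F
    _ = volume E * (ENNReal.ofReal δ⁻¹ * ∫⁻ z in S, ENNReal.ofReal (K z) * ‖z‖ₑ) := by
        rw [lintegral_const_mul' _ _ ENNReal.ofReal_ne_top, lintegral_ofReal_Keps_mul K hε,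
          ← lintegral_indicator hS]
        simp only [indicator_mul_right]

theorem tendsto_rescaled_interaction_zero_general {d : ℕ}
    (K : V d → ℝ) (hKm : Measurable K)
    (hKi : Integrable (fun h : V d => K h * ‖h‖))
    (E F : Set (V d))
    (hEfin : volume E < ⊤)
    (hdist : ∃ δ > (0 : ℝ), ∀ x ∈ E, ∀ y ∈ F, δ ≤ dist x y) :
    Tendsto (fun ε : ℝ => ENNReal.ofReal ε⁻¹ * LKr (Keps K ε) E F)
      (𝓝[>] (0 : ℝ)) (𝓝 0) := by
  obtain ⟨δ, hδ, hEF⟩ := hdist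
  have hfin : ∫⁻ z, ENNReal.ofReal (K z) * ‖z‖ₑ ≠ ∞ := by
    refine ne_top_of_le_ne_top hKi.hasFiniteIntegral.ne (lintegral_mono fun z => ?_)
    rw [enorm_mul, enorm_norm]
    gcongr
    exact Real.ofReal_le_enorm _
  have hradius : Tendsto (fun ε : ℝ => δ / ε) (𝓝[>] 0) atTop := by
    simpa only [div_eq_mul_inv] using tendsto_inv_nhdsGT_zero.const_mul_atTop hδ
  have htail := (tendsto_setLIntegral_le_norm_atTop_zero hfin).comp hradius
  have hbound := ENNReal.Tendsto.const_mul (a := volume E)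
    (ENNReal.Tendsto.const_mul (a := ENNReal.ofReal δ⁻¹) htail (.inr ENNReal.ofReal_ne_top))
    (.inr hEfin.ne)
  rw [mul_zero, mul_zero] at hbound
  refine tendsto_of_tendsto_of_tendsto_of_le_of_le' tendsto_const_nhds hbound
    (.of_forall fun _ => zero_le) ?_
  filter_upwards [self_mem_nhdsWithin] with ε hε
  exact ofReal_inv_mul_LKr_Keps_le K hKm hδ hε hEF

/-- rescaled interactions of sets at positive distance vanish. -/
theorem tendsto_rescaled_interaction_zero {d : ℕ} (hd : 1 ≤ d)
    (K : V d → ℝ) (hKm : Measurable K) (hK0 : ∀ h, 0 ≤ K h) (hKe : ∀ h, K (-h) = K h)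
    (hKi : Integrable (fun h : V d => K h * ‖h‖))
    (E F : Set (V d)) (hE : MeasurableSet E) (hF : MeasurableSet F)
    (hEfin : volume E < ⊤)
    (hdist : ∃ δ > (0 : ℝ), ∀ x ∈ E, ∀ y ∈ F, δ ≤ dist x y) :
    Tendsto (fun ε : ℝ => ENNReal.ofReal ε⁻¹ * LKr (Keps K ε) E F)
      (𝓝[>] (0 : ℝ)) (𝓝 0) :=
  tendsto_rescaled_interaction_zero_general K hKm hKi E F hEfin hdist

end
end
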